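/- Let Ω = {Ω(n)}_{n≥1} be an expanding system of finite subsets of ℤ². Then limsup_{n→∞} β_{k,l}(n)/|Ω(n)| = 0 for all k,l ≥ 1 if and only if limsup_{n→∞} |∂Ω(n)|/|Ω(n)| = 0. -/

import Mathlib

open Filter
open scoped Classical

/-- The `m × n` rectangular lattice `Z_{m×n}(p)` with bottom-left corner `p`. -/
def Zrect (m n : ℕ) (p : ℤ × ℤ) : Finset (ℤ × ℤ) :=
  (Finset.range m ×ˢ Finset.range n).image (fun ab => (p.1 + (ab.1 : ℤ), p.2 + (ab.2 : ℤ)))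

/-- The number of patterns of `U` seen on the finite window `L`. -/
noncomputable def patternCount {A : Type*} (U : Set ((ℤ × ℤ) → A)) (L : Finset (ℤ × ℤ)) : ℕ :=
  Set.ncard ((fun x => fun p : L => x (p : ℤ × ℤ)) '' U)

/-- An additive shift space: nonempty, closed, translation invariant. -/
def IsShiftSpace {A : Type*} [TopologicalSpace A] (U : Set ((ℤ × ℤ) → A)) : Prop :=
  U.Nonempty ∧ IsClosed U ∧ ∀ v : ℤ × ℤ, ∀ x ∈ U, (fun p => x (p + v)) ∈ U

/-- An expanding system of finite sublattices of `ℤ²`. -/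
def IsExpandingSystem (Ω : ℕ → Finset (ℤ × ℤ)) : Prop :=
  (∀ n, Ω n ⊂ Ω (n + 1)) ∧ ∀ p : ℤ × ℤ, ∃ n, p ∈ Ω n

/-- The interior of a finite lattice. -/
def latInterior (L : Finset (ℤ × ℤ)) : Finset (ℤ × ℤ) :=
  L.filter (fun p => (p.1 + 1, p.2) ∈ L ∧ (p.1, p.2 + 1) ∈ L ∧ (p.1 + 1, p.2 + 1) ∈ L)

/-- The boundary of a finite lattice. -/
def latBoundary (L : Finset (ℤ × ℤ)) : Finset (ℤ × ℤ) := L \ latInterior L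

/-- The rectangular entropy `h_r(U)`. -/
noncomputable def rectEntropy {A : Type*} (U : Set ((ℤ × ℤ) → A)) : ℝ :=
  ⨅ mn : ℕ × ℕ, (1 / (((mn.1 + 1) * (mn.2 + 1) : ℕ) : ℝ)) *
    Real.log (patternCount U (Zrect (mn.1 + 1) (mn.2 + 1) (0, 0)))

/-- The entropy `h_Ω(U)` along an expanding system `Ω`. -/
noncomputable def entropyAlong {A : Type*} (U : Set ((ℤ × ℤ) → A)) (Ω : ℕ → Finset (ℤ × ℤ)) : ℝ :=
  Filter.limsup (fun n => (1 / ((Ω n).card : ℝ)) * Real.log (patternCount U (Ω n))) Filter.atTop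

/-- `Ω_{k,l}(n)`: the union of grid rectangles `Z_{k×l}((ak,bl))` contained in `L`. -/
noncomputable def gridPart (k l : ℕ) (L : Finset (ℤ × ℤ)) : Finset (ℤ × ℤ) :=
  L.filter (fun p => ∃ a b : ℤ,
    p ∈ Zrect k l ((k : ℤ) * a, (l : ℤ) * b) ∧ Zrect k l ((k : ℤ) * a, (l : ℤ) * b) ⊆ L)

/-- `β_{k,l}` : the size of the complement of the grid part. -/
noncomputable def betaKL (k l : ℕ) (L : Finset (ℤ × ℤ)) : ℕ := (L \ gridPart k l L).card

/-- `α_{k,l}` : the number of grid rectangles contained in `L`. -/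
noncomputable def alphaKL (k l : ℕ) (L : Finset (ℤ × ℤ)) : ℕ :=
  Set.ncard {ab : ℤ × ℤ | Zrect k l ((k : ℤ) * ab.1, (l : ℤ) * ab.2) ⊆ L}

/-- A tessellation of `ℤ²`. -/
def IsTessellation (T : Finset (ℤ × ℤ)) : Prop :=
  ∃ v : ℕ → ℤ × ℤ,
    (∀ i j : ℕ, i ≠ j → Disjoint (T.image (· + v i)) (T.image (· + v j))) ∧
    ∀ p : ℤ × ℤ, ∃ i : ℕ, p ∈ T.image (· + v i)

/-- Euclidean distance between points of `ℤ²`. -/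
noncomputable def euclDist (p q : ℤ × ℤ) : ℝ :=
  Real.sqrt (((p.1 - q.1 : ℤ) : ℝ) ^ 2 + ((p.2 - q.2 : ℤ) : ℝ) ^ 2)

/-- Block gluing with gap `M`. -/
def BlockGluingWithGap {A : Type*} (U : Set ((ℤ × ℤ) → A)) (M : ℕ) : Prop :=
  ∀ (m₁ n₁ m₂ n₂ : ℕ) (c₁ c₂ : ℤ × ℤ),
    (∀ p ∈ Zrect m₁ n₁ c₁, ∀ q ∈ Zrect m₂ n₂ c₂, (M : ℝ) ≤ euclDist p q) →
    ∀ x₁ ∈ U, ∀ x₂ ∈ U, ∃ x ∈ U,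
      (∀ p ∈ Zrect m₁ n₁ c₁, x p = x₁ p) ∧ ∀ q ∈ Zrect m₂ n₂ c₂, x q = x₂ q

/-- Block gluing. -/
def IsBlockGluing {A : Type*} (U : Set ((ℤ × ℤ) → A)) : Prop :=
  ∃ M : ℕ, 1 ≤ M ∧ BlockGluingWithGap U M

/-- A full shift on a sub-alphabet. -/
def IsFullShift {A : Type*} (U : Set ((ℤ × ℤ) → A)) : Prop :=
  ∃ B : Set A, U = {x | ∀ p : ℤ × ℤ, x p ∈ B}

/-- Shift of finite type. -/
def IsSFT {A : Type*} (U : Set ((ℤ × ℤ) → A)) : Prop :=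
  ∃ (F : Finset (ℤ × ℤ)) (P : Set (F → A)),
    U = {x | ∀ v : ℤ × ℤ, (fun p : F => x (v + (p : ℤ × ℤ))) ∈ P}

/-- `(i,j)` has horizontal length `m` in `L`. -/
def HasHorizLength (L : Finset (ℤ × ℤ)) (p : ℤ × ℤ) (m : ℕ) : Prop :=
  1 ≤ m ∧ (∃ c : ℤ × ℤ, p ∈ Zrect m 1 c ∧ Zrect m 1 c ⊆ L) ∧
    ∀ m' : ℕ, m < m' → ¬ ∃ c : ℤ × ℤ, p ∈ Zrect m' 1 c ∧ Zrect m' 1 c ⊆ L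

/-- `(i,j)` has vertical length `m` in `L`. -/
def HasVertLength (L : Finset (ℤ × ℤ)) (p : ℤ × ℤ) (m : ℕ) : Prop :=
  1 ≤ m ∧ (∃ c : ℤ × ℤ, p ∈ Zrect 1 m c ∧ Zrect 1 m c ⊆ L) ∧
    ∀ m' : ℕ, m < m' → ¬ ∃ c : ℤ × ℤ, p ∈ Zrect 1 m' c ∧ Zrect 1 m' c ⊆ L

noncomputable def betaHoriz (m : ℕ) (L : Finset (ℤ × ℤ)) : ℕ :=
  (L.filter (fun p => HasHorizLength L p m)).card

noncomputable def betaVert (m : ℕ) (L : Finset (ℤ × ℤ)) : ℕ :=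
  (L.filter (fun p => HasVertLength L p m)).card

/-- The one-dimensional sublattice segment `{s • v : 0 ≤ s ≤ n-1}`. -/
def lineSegment (v : ℤ × ℤ) (n : ℕ) : Finset (ℤ × ℤ) :=
  (Finset.range n).image (fun s : ℕ => ((s : ℤ) * v.1, (s : ℤ) * v.2))

/-- The projectional entropy along the one-dimensional sublattice generated by `v`. -/
noncomputable def projEntropy {A : Type*} (U : Set ((ℤ × ℤ) → A)) (v : ℤ × ℤ) : ℝ :=
  ⨅ n : ℕ, (1 / (n + 1 : ℝ)) * Real.log (patternCount U (lineSegment v (n + 1)))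

/-- `ĥ⁽¹⁾(U)`: supremum of projectional entropies over one-dimensional sublattices. -/
noncomputable def hHatOne {A : Type*} (U : Set ((ℤ × ℤ) → A)) : ℝ :=
  ⨆ v : {w : ℤ × ℤ // w ≠ 0}, projEntropy U (v : ℤ × ℤ)

/-- The horizontal golden-mean shift. -/
def goldenMeanShift : Set ((ℤ × ℤ) → Fin 2) :=
  {x | ∀ p : ℤ × ℤ, x p * x (p.1 + 1, p.2) = 0}

/-- The sequence `a_k`: `a_1 = 2`, `a_2 = 3`, `a_k = a_{k-1} + a_{k-2}`. -/
def aSeq : ℕ → ℕ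
  | 0 => 1
  | 1 => 2
  | (k + 2) => aSeq (k + 1) + aSeq k

/-!
Cut `ℤ²` into the grid of `k × l` blocks. A boundary point of `L` either lies outside the grid
part, or in a block contained in `L`, where it sits on the top row or the right column; these
blocks are disjoint, so there are at most `|L| / (k l)` of them. Hence
`k l |∂L| ≤ k l β_{k,l} + (k + l) |L|`, and `|∂L| / |L| ≤ β_{k,k} / |L| + 2 / k`.

Conversely, a point counted by `β_{k,l}` lies in a block meeting both `L` and its complement.
Such a block contains a boundary point, or a point outside `L` whose right or upper neighbour is
in `L`; since a translate of `L` has the size of `L`, there are as many of the latter points as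
there are points of `L` whose right (resp. upper) neighbour is not in `L`, and those are boundary
points. So `β_{k,l} ≤ 3 k l |∂L|`.
-/

open Finset Pointwise Topology

lemma mem_Zrect {m n : ℕ} {c p : ℤ × ℤ} :
    p ∈ Zrect m n c ↔ c.1 ≤ p.1 ∧ p.1 < c.1 + m ∧ c.2 ≤ p.2 ∧ p.2 < c.2 + n := by
  simp only [Zrect, mem_image, mem_product, mem_range, Prod.exists, Prod.ext_iff]
  constructor
  · rintro ⟨a, b, ⟨ha, hb⟩, h1, h2⟩
    omega
  · rintro ⟨h1, h2, h3, h4⟩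
    exact ⟨(p.1 - c.1).toNat, (p.2 - c.2).toNat, ⟨by omega, by omega⟩, by omega, by omega⟩

lemma card_Zrect (m n : ℕ) (c : ℤ × ℤ) : #(Zrect m n c) = m * n := by
  rw [Zrect, card_image_of_injective, card_product, card_range, card_range]
  intro a b hab
  simp only [Prod.ext_iff] at hab
  exact Prod.ext (by omega) (by omega)

lemma iff_of_mem_Zrect {P : ℤ × ℤ → Prop} {m n : ℕ} {c : ℤ × ℤ}
    (hx : ∀ q ∈ Zrect m n c, (P q ↔ P (q.1 + 1, q.2)))
    (hy : ∀ q ∈ Zrect m n c, (P q ↔ P (q.1, q.2 + 1))) :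
    ∀ q ∈ Zrect m n c, (P q ↔ P c) := by
  intro q hq
  obtain ⟨h1, h2, h3, h4⟩ := mem_Zrect.1 hq
  have row : ∀ x, c.1 ≤ x → x ≤ q.1 → (P (x, c.2) ↔ P c) := by
    refine Int.leInduction (fun _ => Iff.rfl) fun x hcx ih hxq => ?_
    exact (hx (x, c.2) (mem_Zrect.2 ⟨hcx, by omega, le_rfl, by omega⟩)).symm.trans
      (ih (by omega))
  have col : ∀ y, c.2 ≤ y → y ≤ q.2 → (P (q.1, y) ↔ P (q.1, c.2)) := by
    refine Int.leInduction (fun _ => Iff.rfl) fun y hcy ih hyq => ?_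
    exact (hy (q.1, y) (mem_Zrect.2 ⟨h1, h2, hcy, by omega⟩)).symm.trans (ih (by omega))
  exact (col q.2 h3 le_rfl).trans (row q.1 h1 le_rfl)

/-- The grid rectangle `Z_{k×l}((ak, bl))` indexed by `t = (a, b)`. -/
def block (k l : ℕ) (t : ℤ × ℤ) : Finset (ℤ × ℤ) := Zrect k l (k * t.1, l * t.2)

def blockIndex (k l : ℕ) (p : ℤ × ℤ) : ℤ × ℤ := (p.1 / k, p.2 / l)

section Blocks

variable {k l : ℕ}

lemma mem_block_iff (hk : 0 < k) (hl : 0 < l) {t p : ℤ × ℤ} :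
    p ∈ block k l t ↔ blockIndex k l p = t := by
  have hk' : (0 : ℤ) < k := by exact_mod_cast hk
  have hl' : (0 : ℤ) < l := by exact_mod_cast hl
  rw [block, mem_Zrect, blockIndex, Prod.ext_iff, Int.ediv_eq_iff_of_pos hk',
    Int.ediv_eq_iff_of_pos hl']
  simp only [mul_comm _ (k : ℤ), mul_comm _ (l : ℤ), and_assoc]

lemma mem_block_blockIndex (hk : 0 < k) (hl : 0 < l) (p : ℤ × ℤ) :
    p ∈ block k l (blockIndex k l p) :=
  (mem_block_iff hk hl).2 rfl

lemma mem_gridPart_iff (hk : 0 < k) (hl : 0 < l) {L : Finset (ℤ × ℤ)} {p : ℤ × ℤ} :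
    p ∈ gridPart k l L ↔ block k l (blockIndex k l p) ⊆ L := by
  rw [gridPart, mem_filter]
  constructor
  · rintro ⟨-, a, b, hp, hsub⟩
    rwa [(mem_block_iff (t := (a, b)) hk hl).1 hp]
  · intro hsub
    exact ⟨hsub (mem_block_blockIndex hk hl p), _, _, mem_block_blockIndex hk hl p, hsub⟩

end Blocks

lemma latBoundary_subset (L : Finset (ℤ × ℤ)) : latBoundary L ⊆ L := sdiff_subset

lemma betaKL_le_card (k l : ℕ) (L : Finset (ℤ × ℤ)) : betaKL k l L ≤ #L :=
  card_le_card sdiff_subset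

lemma mem_latBoundary {L : Finset (ℤ × ℤ)} {p : ℤ × ℤ} :
    p ∈ latBoundary L ↔ p ∈ L ∧
      ¬((p.1 + 1, p.2) ∈ L ∧ (p.1, p.2 + 1) ∈ L ∧ (p.1 + 1, p.2 + 1) ∈ L) := by
  rw [latBoundary, latInterior, Finset.mem_sdiff, mem_filter]
  tauto

lemma card_latBoundary_inter_le_of_subset {L : Finset (ℤ × ℤ)} {m n : ℕ} {c : ℤ × ℤ}
    (h : Zrect m n c ⊆ L) : #(latBoundary L ∩ Zrect m n c) ≤ m + n := by
  have hsub : latBoundary L ∩ Zrect m n c ⊆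
      Zrect m 1 (c.1, c.2 + n - 1) ∪ Zrect 1 n (c.1 + m - 1, c.2) := by
    intro q hq
    obtain ⟨hqB, hqR⟩ := mem_inter.1 hq
    rw [mem_Zrect] at hqR
    rw [mem_union, mem_Zrect, mem_Zrect]
    by_contra hq'
    refine (mem_latBoundary.1 hqB).2 ⟨h ?_, h ?_, h ?_⟩ <;> rw [mem_Zrect] <;> omega
  calc #(latBoundary L ∩ Zrect m n c) ≤ m * 1 + 1 * n := by
        rw [← card_Zrect m 1, ← card_Zrect 1 n]
        exact (card_le_card hsub).trans (card_union_le _ _)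
    _ = m + n := by ring

lemma mul_card_latBoundary_le {k l : ℕ} (hk : 0 < k) (hl : 0 < l) (L : Finset (ℤ × ℤ)) :
    k * l * #(latBoundary L) ≤ k * l * betaKL k l L + (k + l) * #L := by
  set G := gridPart k l L
  set full := G.image (blockIndex k l)
  have split : #(latBoundary L) ≤ betaKL k l L + #(latBoundary L ∩ G) := by
    rw [← card_sdiff_add_card_inter (latBoundary L) G]
    exact Nat.add_le_add_right (card_le_card (sdiff_subset_sdiff (latBoundary_subset L) le_rfl)) _
  have boundary_in_full : #(latBoundary L ∩ G) ≤ (k + l) * #full := by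
    refine card_le_mul_card_image_of_maps_to
      (fun p hp => mem_image_of_mem _ (mem_inter.1 hp).2) _ fun t ht => ?_
    obtain ⟨p, hp, rfl⟩ := mem_image.1 ht
    refine (card_le_card fun q hq => ?_).trans
      (card_latBoundary_inter_le_of_subset ((mem_gridPart_iff hk hl).1 hp))
    obtain ⟨hq, hqp⟩ := mem_filter.1 hq
    exact mem_inter.2 ⟨(mem_inter.1 hq).1, (mem_block_iff hk hl).2 hqp⟩
  have full_le : k * l * #full ≤ #L := by
    refine (mul_card_image_le_card_of_maps_to (fun p hp => mem_image_of_mem _ hp) _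
      fun t ht => ?_).trans (card_le_card (filter_subset _ L))
    obtain ⟨p, hp, rfl⟩ := mem_image.1 ht
    rw [← card_Zrect]
    refine card_le_card fun q hq => mem_filter.2 ⟨?_, (mem_block_iff hk hl).1 hq⟩
    rw [mem_gridPart_iff hk hl, (mem_block_iff hk hl).1 hq]
    exact (mem_gridPart_iff hk hl).1 hp
  calc k * l * #(latBoundary L) ≤ k * l * (betaKL k l L + (k + l) * #full) :=
        Nat.mul_le_mul_left _ (split.trans (Nat.add_le_add_left boundary_in_full _))
    _ = k * l * betaKL k l L + (k + l) * (k * l * #full) := by ring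
    _ ≤ k * l * betaKL k l L + (k + l) * #L := by gcongr

/-- `(-v +ᵥ L) \ L` is the set of points outside `L` whose `v`-neighbour lies in `L`. -/
def markedPoints (L : Finset (ℤ × ℤ)) : Finset (ℤ × ℤ) :=
  latBoundary L ∪ (((-(1, 0) : ℤ × ℤ) +ᵥ L) \ L) ∪ (((-(0, 1) : ℤ × ℤ) +ᵥ L) \ L)

lemma mem_neg_vadd_iff {L : Finset (ℤ × ℤ)} {v q : ℤ × ℤ} :
    q ∈ -v +ᵥ L ↔ (q.1 + v.1, q.2 + v.2) ∈ L := by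
  rw [mem_neg_vadd_finset_iff, vadd_eq_add, add_comm]
  rfl

/-- `-v +ᵥ L` and `L` have the same size, so the points entering `L` in direction `v` are as
many as the points leaving it. -/
lemma card_neg_vadd_sdiff_le {L : Finset (ℤ × ℤ)} {v : ℤ × ℤ}
    (hv : ∀ p ∈ L, (p.1 + v.1, p.2 + v.2) ∉ L → p ∈ latBoundary L) :
    #((-v +ᵥ L) \ L) ≤ #(latBoundary L) := by
  rw [card_sdiff_comm (card_vadd_finset _ _)]
  refine card_le_card fun p hp => ?_
  obtain ⟨hpL, hpv⟩ := Finset.mem_sdiff.1 hp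
  exact hv p hpL (mem_neg_vadd_iff.not.1 hpv)

lemma card_markedPoints_le (L : Finset (ℤ × ℤ)) :
    #(markedPoints L) ≤ 3 * #(latBoundary L) := by
  have h₁ := card_neg_vadd_sdiff_le (L := L) (v := (1, 0)) fun p hp hp' =>
    mem_latBoundary.2 ⟨hp, fun h => hp' (by simpa using h.1)⟩
  have h₂ := card_neg_vadd_sdiff_le (L := L) (v := (0, 1)) fun p hp hp' =>
    mem_latBoundary.2 ⟨hp, fun h => hp' (by simpa using h.2.1)⟩
  rw [markedPoints]
  refine ((card_union_le _ _).trans (Nat.add_le_add_right (card_union_le _ _) _)).trans ?_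
  omega

/-- Away from marked points, membership in `L` does not change under unit steps to the right or
upwards, and these steps connect all points of a rectangle. -/
lemma exists_mem_Zrect_markedPoints {L : Finset (ℤ × ℤ)} {m n : ℕ} {c : ℤ × ℤ}
    (hmeet : ∃ p ∈ Zrect m n c, p ∈ L) (hnot : ¬Zrect m n c ⊆ L) :
    ∃ q ∈ Zrect m n c, q ∈ markedPoints L := by
  by_contra! h
  have hstep : ∀ q ∈ Zrect m n c,
      (q ∈ L ↔ (q.1 + 1, q.2) ∈ L) ∧ (q ∈ L ↔ (q.1, q.2 + 1) ∈ L) := fun q hq => by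
    have := h q hq
    simp only [markedPoints, mem_union, Finset.mem_sdiff, mem_neg_vadd_iff, mem_latBoundary,
      add_zero, not_or] at this
    tauto
  have hconst := iff_of_mem_Zrect (fun q hq => (hstep q hq).1) fun q hq => (hstep q hq).2
  obtain ⟨p, hpR, hpL⟩ := hmeet
  exact hnot fun q hq => (hconst q hq).2 ((hconst p hpR).1 hpL)

lemma betaKL_le_mul_card_latBoundary {k l : ℕ} (hk : 0 < k) (hl : 0 < l) (L : Finset (ℤ × ℤ)) :
    betaKL k l L ≤ 3 * k * l * #(latBoundary L) := by
  set bad := (L \ gridPart k l L).image (blockIndex k l)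
  have h₁ : betaKL k l L ≤ k * l * #bad := by
    refine card_le_mul_card_image _ _ fun t _ => ?_
    rw [← card_Zrect k l (k * t.1, l * t.2)]
    exact card_le_card fun q hq => (mem_block_iff hk hl).2 (mem_filter.1 hq).2
  have h₂ : bad ⊆ (markedPoints L).image (blockIndex k l) := by
    intro t ht
    obtain ⟨p, hp, rfl⟩ := mem_image.1 ht
    obtain ⟨hpL, hpG⟩ := Finset.mem_sdiff.1 hp
    obtain ⟨q, hqR, hqM⟩ := exists_mem_Zrect_markedPoints
      ⟨p, mem_block_blockIndex hk hl p, hpL⟩ fun hsub => hpG ((mem_gridPart_iff hk hl).2 hsub)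
    exact mem_image.2 ⟨q, hqM, (mem_block_iff hk hl).1 hqR⟩
  calc betaKL k l L ≤ k * l * #(markedPoints L) :=
        h₁.trans (Nat.mul_le_mul_left _ ((card_le_card h₂).trans card_image_le))
    _ ≤ k * l * (3 * #(latBoundary L)) := Nat.mul_le_mul_left _ (card_markedPoints_le L)
    _ = 3 * k * l * #(latBoundary L) := by ring

lemma limsup_div_eq_zero_iff_tendsto {u v : ℕ → ℕ} (h : ∀ n, u n ≤ v n) :
    limsup (fun n => (u n : ℝ) / v n) atTop = 0 ↔
      Tendsto (fun n => (u n : ℝ) / v n) atTop (𝓝 0) := by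
  have h₀ : ∀ n, 0 ≤ (u n : ℝ) / v n := fun n => by positivity
  have h₁ : ∀ n, (u n : ℝ) / v n ≤ 1 := fun n =>
    div_le_one_of_le₀ (by exact_mod_cast h n) (by positivity)
  have hbdd : IsBoundedUnder (· ≤ ·) atTop fun n => (u n : ℝ) / v n := isBoundedUnder_of ⟨1, h₁⟩
  have hbdd' : IsBoundedUnder (· ≥ ·) atTop fun n => (u n : ℝ) / v n := isBoundedUnder_of ⟨0, h₀⟩
  refine ⟨fun hlim => tendsto_of_le_liminf_of_limsup_le ?_ hlim.le hbdd hbdd', Tendsto.limsup_eq⟩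
  exact le_liminf_of_le hbdd.isCoboundedUnder_ge (Eventually.of_forall h₀)

lemma tendsto_nhds_zero_of_forall_le_add {α : Type*} {l : Filter α} {g : α → ℝ}
    {f : ℕ → α → ℝ} {c : ℕ → ℝ} (hg : ∀ x, 0 ≤ g x) (hf : ∀ k, Tendsto (f k) l (𝓝 0))
    (hc : Tendsto c atTop (𝓝 0)) (hle : ∀ k x, g x ≤ f k x + c k) : Tendsto g l (𝓝 0) := by
  refine tendsto_order.2 ⟨fun a ha => Eventually.of_forall fun x => ha.trans_le (hg x),
    fun ε hε => ?_⟩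
  obtain ⟨k, hk⟩ := (hc.eventually (gt_mem_nhds (half_pos hε))).exists
  filter_upwards [(hf k).eventually (gt_mem_nhds (half_pos hε))] with x hx
  linarith [hle k x]

lemma card_latBoundary_div_le {k : ℕ} (hk : 0 < k) (L : Finset (ℤ × ℤ)) :
    (#(latBoundary L) : ℝ) / #L ≤ betaKL k k L / #L + 2 / k := by
  rcases (#L).eq_zero_or_pos with hL | hL
  · rw [hL, Nat.cast_zero, div_zero, div_zero, zero_add]
    positivity
  have h : (k * k * #(latBoundary L) : ℝ) ≤ k * k * betaKL k k L + (k + k) * #L := by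
    exact_mod_cast mul_card_latBoundary_le hk hk L
  have hk' : (0 : ℝ) < k := by exact_mod_cast hk
  have hL' : (0 : ℝ) < #L := by exact_mod_cast hL
  rw [div_add_div _ _ hL'.ne' hk'.ne', div_le_div_iff₀ hL' (by positivity)]
  nlinarith

lemma betaKL_div_le {k l : ℕ} (hk : 0 < k) (hl : 0 < l) (L : Finset (ℤ × ℤ)) :
    (betaKL k l L : ℝ) / #L ≤ 3 * k * l * (#(latBoundary L) / #L) := by
  rw [← mul_div_assoc]
  gcongr
  exact_mod_cast betaKL_le_mul_card_latBoundary hk hl L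

theorem beta_ratio_limsup_zero_iff_boundary_ratio_limsup_zero_general
    (Ω : ℕ → Finset (ℤ × ℤ)) :
    (∀ k l : ℕ, 1 ≤ k → 1 ≤ l →
        Filter.limsup (fun n => (betaKL k l (Ω n) : ℝ) / ((Ω n).card : ℝ)) Filter.atTop = 0) ↔
      Filter.limsup
        (fun n => ((latBoundary (Ω n)).card : ℝ) / ((Ω n).card : ℝ)) Filter.atTop = 0 := by
  have hβ (k l : ℕ) := limsup_div_eq_zero_iff_tendsto fun n => betaKL_le_card k l (Ω n)
  simp only [limsup_div_eq_zero_iff_tendsto fun n => card_le_card (latBoundary_subset (Ω n)), hβ]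
  constructor
  · intro h
    refine tendsto_nhds_zero_of_forall_le_add (fun n => by positivity)
      (fun k => h (k + 1) (k + 1) k.succ_pos k.succ_pos)
      ((tendsto_const_div_atTop_nhds_zero_nat 2).comp (tendsto_add_atTop_nat 1))
      fun k n => card_latBoundary_div_le k.succ_pos (Ω n)
  · intro h k l hk hl
    exact squeeze_zero (fun n => by positivity) (fun n => betaKL_div_le hk hl (Ω n))
      (by simpa using h.const_mul (3 * k * l : ℝ))

/-- Lemma 3.1: for an expanding system `Ω`,
`limsup β_{k,l}(n)/|Ω(n)| = 0` for all `k,l ≥ 1` iff `limsup |∂Ω(n)|/|Ω(n)| = 0`. -/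
theorem beta_ratio_limsup_zero_iff_boundary_ratio_limsup_zero
    (Ω : ℕ → Finset (ℤ × ℤ)) (hΩ : IsExpandingSystem Ω) :
    (∀ k l : ℕ, 1 ≤ k → 1 ≤ l →
        Filter.limsup (fun n => (betaKL k l (Ω n) : ℝ) / ((Ω n).card : ℝ)) Filter.atTop = 0) ↔
      Filter.limsup
        (fun n => ((latBoundary (Ω n)).card : ℝ) / ((Ω n).card : ℝ)) Filter.atTop = 0 :=
  beta_ratio_limsup_zero_iff_boundary_ratio_limsup_zero_general Ω
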